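/- Let g ≥ 2 be an integer and let U₁, U₂, U₃ be elements of a vector space over ℚ (in the paper these are the specific formal series U₁ = log ∏_{k≥1}(1−q^{4k}), U₂ = log ∏_{k≥1}(1−q^k), U₃ = log ∏_{k≥1}(1−(−q)^k)). For d, a ∈ ℤ/2 define the generating elements by the rank-2 conjectural formulas: Q̌(d,0) = (−1)^d (2−2g)·2^{4g−1}·U₁, Q̌(d,1) = (2−2g)·2^{2g−1}·(U₂ + (−1)^d U₃), Q̂(d,0) = (−1)^d (2−2g)·2^{2g−1}·U₁, Q̂(d,1) = (2−2g)·(2^{4g−1}·U₂ + (−1)^d·2^{2g−1}·U₃). Let σ = (12) act by interchanging U₁ and U₂ in these formulas (i.e. σ·Q̌(d,a) is the element obtained from the formula for Q̌(d,a) with U₁ and U₂ swapped). Then for every d, a ∈ ℤ/2 one has the identity 2·(σ·Q̌(d,a)) = Σ_{d'∈ℤ/2} Σ_{a'∈ℤ/2} (−1)^{d·a' + d'·a} · Q̂(d',a'), where the sign exponent d·a' + d'·a is computed from representatives in {0,1}. (This is the 'Enumerative mirror symmetry' identity for SL₂ versus PGL₂ quasimap/Vafa–Witten generating series; it is a purely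 linear identity in U₁, U₂, U₃ and hence holds for arbitrary U₁, U₂, U₃.) -/

import Mathlib

/-!
Split `Q̂(d', a')` into a part independent of `d'` and `(-1)^d'` times another part. The sum
over `d'` weighted by `(-1)^(d'a)` is a discrete Fourier transform on `ℤ/2`: it returns twice the
first part when `a = 0` and twice the second when `a = 1`. The remaining sum over `a'` weighted by
`(-1)^(d a')` then reassembles `2 • Q̌(d, a)` with `U₁` and `U₂` interchanged, coefficient by
coefficient.
-/

/-- The conjectural rank-2 SL₂ generating element `Q̌(d,a)`, as a function of the
three basis elements `U₁, U₂, U₃` (so that the `(12)`-action swapping `U₁` and `U₂`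
is realized by swapping the first two arguments). -/
noncomputable def QcheckF {V : Type*} [AddCommGroup V] [Module ℚ V]
    (g : ℕ) (U₁ U₂ U₃ : V) (d a : ZMod 2) : V :=
  if a = 0 then
    ((-1 : ℚ) ^ d.val * (2 - 2 * (g : ℚ)) * 2 ^ (4 * g - 1)) • U₁
  else
    ((2 - 2 * (g : ℚ)) * 2 ^ (2 * g - 1)) • (U₂ + ((-1 : ℚ) ^ d.val) • U₃)

/-- The conjectural rank-2 PGL₂ generating element `Q̂(d,a)`. -/
noncomputable def QhatF {V : Type*} [AddCommGroup V] [Module ℚ V]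
    (g : ℕ) (U₁ U₂ U₃ : V) (d a : ZMod 2) : V :=
  if a = 0 then
    ((-1 : ℚ) ^ d.val * (2 - 2 * (g : ℚ)) * 2 ^ (2 * g - 1)) • U₁
  else
    (2 - 2 * (g : ℚ)) • ((2 ^ (4 * g - 1) : ℚ) • U₂ +
      ((-1 : ℚ) ^ d.val * 2 ^ (2 * g - 1)) • U₃)

theorem ZMod.sum_univ_two {M : Type*} [AddCommMonoid M] (f : ZMod 2 → M) :
    ∑ x, f x = f 0 + f 1 :=
  Fin.sum_univ_two f

theorem ZMod.eq_zero_or_eq_one_of_two (x : ZMod 2) : x = 0 ∨ x = 1 := by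
  revert x
  decide

theorem ZMod.sum_neg_one_pow_val_mul_smul_add {R V : Type*} [CommRing R] [AddCommGroup V]
    [Module R V] (A B : V) (a : ZMod 2) :
    ∑ d : ZMod 2, (-1 : R) ^ (d.val * a.val) • (A + (-1 : R) ^ d.val • B) =
      (2 : R) • if a = 0 then A else B := by
  rw [ZMod.sum_univ_two]
  obtain rfl | rfl := ZMod.eq_zero_or_eq_one_of_two a <;> simp [ZMod.val_one] <;> module

theorem QhatF_eq_add_neg_one_pow_smul {V : Type*} [AddCommGroup V] [Module ℚ V] (g : ℕ)
    (U₁ U₂ U₃ : V) (d a : ZMod 2) :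
    QhatF g U₁ U₂ U₃ d a =
      (if a = 0 then 0 else ((2 - 2 * (g : ℚ)) * 2 ^ (4 * g - 1)) • U₂) +
        (-1 : ℚ) ^ d.val • ((2 - 2 * (g : ℚ)) * 2 ^ (2 * g - 1)) • if a = 0 then U₁ else U₃ := by
  unfold QhatF
  split_ifs <;> module

theorem enumerative_mirror_symmetry_general {V : Type*} [AddCommGroup V] [Module ℚ V]
    (g : ℕ) (U₁ U₂ U₃ : V) (d a : ZMod 2) :
    (2 : ℚ) • QcheckF g U₂ U₁ U₃ d a =
      ∑ d' : ZMod 2, ∑ a' : ZMod 2,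
        ((-1 : ℚ) ^ (d.val * a'.val + d'.val * a.val)) • QhatF g U₁ U₂ U₃ d' a' := by
  simp only [pow_add, mul_smul]
  rw [Finset.sum_comm]
  simp only [← Finset.smul_sum, QhatF_eq_add_neg_one_pow_smul,
    ZMod.sum_neg_one_pow_val_mul_smul_add]
  rw [ZMod.sum_univ_two]
  obtain rfl | rfl := ZMod.eq_zero_or_eq_one_of_two a <;> simp [QcheckF, ZMod.val_one] <;> module

/-- Enumerative mirror symmetry for rank 2: for all `d, a ∈ ℤ/2`,
`2·(σ·Q̌(d,a)) = Σ_{d',a'} (−1)^{d·a' + d'·a} Q̂(d',a')`, where `σ = (12)` swaps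
`U₁` and `U₂` in the defining formulas.  This is a purely linear identity in
`U₁, U₂, U₃`, hence stated for arbitrary elements of a ℚ-vector space. -/
theorem enumerative_mirror_symmetry {V : Type*} [AddCommGroup V] [Module ℚ V]
    (g : ℕ) (hg : 2 ≤ g) (U₁ U₂ U₃ : V) (d a : ZMod 2) :
    (2 : ℚ) • QcheckF g U₂ U₁ U₃ d a =
      ∑ d' : ZMod 2, ∑ a' : ZMod 2,
        ((-1 : ℚ) ^ (d.val * a'.val + d'.val * a.val)) • QhatF g U₁ U₂ U₃ d' a' :=
  enumerative_mirror_symmetry_general g U₁ U₂ U₃ d a
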